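/- Fix t > 1 and let 𝔫_t be the 10-dimensional two-step nilpotent Lie algebra with center 𝔷 = span(Z₁,Z₂) and 𝔳 = ℝ⁸, whose bracket is determined by J_{xZ₁+yZ₂} = diag(C₁,C₂) where C₁ has rows (0,0,-x,y),(0,0,y,x),(x,-y,0,0),(-y,-x,0,0) and C₂ has rows (0,0,-tx,y),(0,0,y,tx),(tx,-y,0,0),(-y,-tx,0,0). Then det(J_{xZ₁+yZ₂}) = ((x²+y²)(t²x²+y²))², so the Pfaffian form of 𝔫_t is (x²+y²)(t²x²+y²), which is positive for (x,y) ≠ (0,0); hence 𝔫_t is non-singular. -/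

import Mathlib

open Matrix

def C1 (x y : ℝ) : Matrix (Fin 4) (Fin 4) ℝ :=
  !![0, 0, -x, y;
     0, 0, y, x;
     x, -y, 0, 0;
     -y, -x, 0, 0]

def C2 (t x y : ℝ) : Matrix (Fin 4) (Fin 4) ℝ :=
  !![0, 0, -t * x, y;
     0, 0, y, t * x;
     t * x, -y, 0, 0;
     -y, -t * x, 0, 0]

def Dmat (a1 a2 a3 : ℝ) : Matrix (Fin 4) (Fin 4) ℝ :=
  !![0, -a1, -a2, -a3;
     a1, 0, a3, -a2;
     a2, -a3, 0, a1;
     a3, a2, -a1, 0]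

/-- `J_{x,y} = diag(C₁, C₂) ∈ so(8)`. -/
def Jmat (t x y : ℝ) : Matrix (Fin 4 ⊕ Fin 4) (Fin 4 ⊕ Fin 4) ℝ :=
  Matrix.fromBlocks (C1 x y) 0 0 (C2 t x y)

/-! The second block is the first one with `x` rescaled to `t x`, so `det J` is the product of
two values of `det C₁ = (x² + y²)²`. Since `t ≠ 0`, both factors `x² + y²` and `t²x² + y²` of
the Pfaffian are positive away from the origin, so `det J ≠ 0`. -/

theorem C2_eq_C1 (t x y : ℝ) : C2 t x y = C1 (t * x) y := by
  ext i j
  fin_cases i <;> fin_cases j <;> simp [C1, C2]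

theorem det_C1 (x y : ℝ) : (C1 x y).det = (x ^ 2 + y ^ 2) ^ 2 := by
  simp [C1, det_succ_row_zero, Fin.sum_univ_succ, Fin.succAbove]
  ring

theorem det_Jmat (t x y : ℝ) :
    (Jmat t x y).det = ((x ^ 2 + y ^ 2) * (t ^ 2 * x ^ 2 + y ^ 2)) ^ 2 := by
  rw [Jmat, det_fromBlocks_zero₂₁, C2_eq_C1, det_C1, det_C1]
  ring

theorem sq_add_sq_pos {R : Type*} [CommRing R] [LinearOrder R] [IsStrictOrderedRing R]
    {a b : R} (h : ¬(a = 0 ∧ b = 0)) : 0 < a ^ 2 + b ^ 2 := by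
  rcases not_and_or.mp h with ha | hb <;> positivity

/-- For t > 1, the operators J_{xZ₁+yZ₂} = diag(C₁,C₂) of the 10-dimensional
two-step nilpotent Lie algebra 𝔫_t satisfy
det J = ((x²+y²)(t²x²+y²))², so the Pfaffian form is (x²+y²)(t²x²+y²), which
is positive for (x,y) ≠ (0,0); hence every such J is invertible and 𝔫_t is
non-singular. -/
theorem stmt_19 (t : ℝ) (ht : 1 < t) :
    (∀ x y : ℝ, (Jmat t x y).det = ((x ^ 2 + y ^ 2) * (t ^ 2 * x ^ 2 + y ^ 2)) ^ 2) ∧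
    (∀ x y : ℝ, ¬(x = 0 ∧ y = 0) →
      0 < (x ^ 2 + y ^ 2) * (t ^ 2 * x ^ 2 + y ^ 2) ∧ IsUnit (Jmat t x y)) := by
  refine ⟨det_Jmat t, fun x y hxy => ?_⟩
  have ht0 : t ≠ 0 := (zero_lt_one.trans ht).ne'
  have htxy : ¬(t * x = 0 ∧ y = 0) := by simpa [ht0] using hxy
  have hpos : 0 < (x ^ 2 + y ^ 2) * (t ^ 2 * x ^ 2 + y ^ 2) := by
    simpa [mul_pow] using mul_pos (sq_add_sq_pos hxy) (sq_add_sq_pos htxy)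
  refine ⟨hpos, ?_⟩
  rw [isUnit_iff_isUnit_det, det_Jmat]
  exact (pow_pos hpos 2).ne'.isUnit
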